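/- arXiv:1509.06968 — 2 statements merged into one kernel-verified Lean document; each statement's English description precedes it below -/
import Mathlib

section
/- Let (Ω, 𝓕, P) be a probability space, let T, T', T'' : Ω → ℝ be integrable random variables, let B ∈ 𝓕 be a measurable event, and let c ≥ 0 and ε ∈ [0,1] be real constants. Assume: (i) T ≥ 0 almost surely; (ii) T' − T'' ≤ T almost surely; (iii) T' ≤ T'' almost surely on B; (iv) E[T] ≤ (1+ε)·c; (v) P({T < (1−ε)·c}) ≤ ε; (vi) P(B) ≥ 1/4. Then E[T' − T''] ≤ (3/4 + 3ε)·c. -/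
open MeasureTheory

/-- Core estimate in the proof of Theorem 3.1: under the listed hypotheses,
`E[T' - T''] ≤ (3/4 + 3ε) * c`. -/
theorem expectation_diff_le_core_estimate
    {Ω : Type*} [MeasurableSpace Ω] (P : Measure Ω) [IsProbabilityMeasure P]
    (T T' T'' : Ω → ℝ)
    (hT : Integrable T P) (hT' : Integrable T' P) (hT'' : Integrable T'' P)
    (B : Set Ω) (hB : MeasurableSet B)
    (c ε : ℝ) (hc : 0 ≤ c) (hε0 : 0 ≤ ε) (hε1 : ε ≤ 1)
    (h1 : ∀ᵐ ω ∂P, 0 ≤ T ω)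
    (h2 : ∀ᵐ ω ∂P, T' ω - T'' ω ≤ T ω)
    (h3 : ∀ᵐ ω ∂P, ω ∈ B → T' ω ≤ T'' ω)
    (h4 : ∫ ω, T ω ∂P ≤ (1 + ε) * c)
    (h5 : (P {ω | T ω < (1 - ε) * c}).toReal ≤ ε)
    (h6 : (1 : ℝ) / 4 ≤ (P B).toReal) :
    ∫ ω, (T' ω - T'' ω) ∂P ≤ (3 / 4 + 3 * ε) * c := by
  obtain ⟨g, hg_sm, hg_ae⟩ := hT.aestronglyMeasurable
  have hgm : Measurable g := hg_sm.measurable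
  set S : Set Ω := B ∩ {ω | (1 - ε) * c ≤ g ω} with hSdef
  have hSm : MeasurableSet S := hB.inter (measurableSet_le measurable_const hgm)
  have hind : Integrable (S.indicator fun _ => (1 - ε) * c) P :=
    (integrable_const _).indicator hSm
  -- measure of S
  have hPS : 1 / 4 - ε ≤ (P S).toReal := by
    have hsub : B ⊆ S ∪ ({ω | T ω < (1 - ε) * c} ∪ {ω | T ω ≠ g ω}) := by
      intro ω hω
      by_cases h : (1 - ε) * c ≤ g ω
      · exact Or.inl ⟨hω, h⟩
      · by_cases h' : T ω = g ω
        · exact Or.inr (Or.inl (by simp only [Set.mem_setOf_eq]; rw [h']; linarith))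
        · exact Or.inr (Or.inr h')
    have hnull : P {ω | T ω ≠ g ω} = 0 := by
      exact hg_ae
    have hle : P B ≤ P S + P {ω | T ω < (1 - ε) * c} := by
      calc P B ≤ P (S ∪ ({ω | T ω < (1 - ε) * c} ∪ {ω | T ω ≠ g ω})) :=
            measure_mono hsub
        _ ≤ P S + P ({ω | T ω < (1 - ε) * c} ∪ {ω | T ω ≠ g ω}) := measure_union_le _ _
        _ ≤ P S + (P {ω | T ω < (1 - ε) * c} + P {ω | T ω ≠ g ω}) := by
            gcongr; exact measure_union_le _ _
        _ = P S + P {ω | T ω < (1 - ε) * c} := by rw [hnull, add_zero]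
    have hfin1 : P S ≠ ⊤ := measure_ne_top _ _
    have hfin2 : P {ω | T ω < (1 - ε) * c} ≠ ⊤ := measure_ne_top _ _
    have := ENNReal.toReal_mono (by finiteness) hle
    rw [ENNReal.toReal_add hfin1 hfin2] at this
    linarith
  -- pointwise bound
  have hbd : ∀ᵐ ω ∂P,
      T' ω - T'' ω ≤ T ω - S.indicator (fun _ => (1 - ε) * c) ω := by
    filter_upwards [h2, h3, hg_ae] with ω hω2 hω3 hωg
    by_cases hωS : ω ∈ S
    · have hT1 : (1 - ε) * c ≤ T ω := by rw [hωg]; exact hωS.2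
      have : T' ω - T'' ω ≤ 0 := by linarith [hω3 hωS.1]
      rw [Set.indicator_of_mem hωS]
      linarith
    · rw [Set.indicator_of_notMem hωS]
      linarith
  have hint : ∫ ω, (T' ω - T'' ω) ∂P ≤
      ∫ ω, (T ω - S.indicator (fun _ => (1 - ε) * c) ω) ∂P :=
    integral_mono_ae (hT'.sub hT'') (hT.sub hind) hbd
  rw [integral_sub hT hind, integral_indicator_const _ hSm] at hint
  have hps1 : (P S).toReal ≤ 1 := by
    simpa using ENNReal.toReal_mono (by finiteness) (prob_le_one (μ := P) (s := S))
  have hmul : (1 - ε) * c * (1 / 4 - ε) ≤ (1 - ε) * c * (P S).toReal := by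
    apply mul_le_mul_of_nonneg_left hPS
    nlinarith
  have : ∫ ω, (T' ω - T'' ω) ∂P ≤ (1 + ε) * c - (1 - ε) * c * (1 / 4 - ε) := by
    simp only [smul_eq_mul, Measure.real] at hint
    nlinarith [hint, h4]
  nlinarith [this, mul_nonneg hc hε0, mul_nonneg (mul_nonneg hc hε0) hε0]
end

section
/- Let (Ω, 𝓕, P) be a probability space, let T, T', T'' : Ω → ℝ be integrable random variables, let B ∈ 𝓕 be a measurable event, and let c > 0 and ε ∈ [0, 1/16) be real constants. Assume: (i) T ≥ 0 almost surely; (ii) T' − T'' ≤ T almost surely; (iii) T' ≤ T'' almost surely on B; (iv) E[T] ≤ (1+ε)·c; (v) P({T < (1−ε)·c}) ≤ ε; (vi) P(B) ≥ 1/4. Then E[T' − T''] < (1−ε)·c. -/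
open MeasureTheory

/-- Contradiction step in the proof of Theorem 3.1: under the listed hypotheses,
with `ε < 1/16`, we get `E[T' - T''] < (1 - ε) * c`. -/
theorem expectation_diff_lt_contradiction_step
    {Ω : Type*} [MeasurableSpace Ω] (P : Measure Ω) [IsProbabilityMeasure P]
    (T T' T'' : Ω → ℝ)
    (hT : Integrable T P) (hT' : Integrable T' P) (hT'' : Integrable T'' P)
    (B : Set Ω) (hB : MeasurableSet B)
    (c ε : ℝ) (hc : 0 < c) (hε0 : 0 ≤ ε) (hε1 : ε < 1 / 16)
    (h1 : ∀ᵐ ω ∂P, 0 ≤ T ω)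
    (h2 : ∀ᵐ ω ∂P, T' ω - T'' ω ≤ T ω)
    (h3 : ∀ᵐ ω ∂P, ω ∈ B → T' ω ≤ T'' ω)
    (h4 : ∫ ω, T ω ∂P ≤ (1 + ε) * c)
    (h5 : (P {ω | T ω < (1 - ε) * c}).toReal ≤ ε)
    (h6 : (1 : ℝ) / 4 ≤ (P B).toReal) :
    ∫ ω, (T' ω - T'' ω) ∂P < (1 - ε) * c := by
  set A : Set Ω := {ω | T ω < (1 - ε) * c} with hA
  set A' : Set Ω := toMeasurable P A with hA'
  have hA'meas : MeasurableSet A' := measurableSet_toMeasurable P A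
  have hAA' : A ⊆ A' := subset_toMeasurable P A
  have hA'toReal : (P A').toReal ≤ ε := by
    rw [hA', measure_toMeasurable]; exact h5
  -- Step 1: ∫ (T' - T'') ≤ ∫_{Bᶜ} T
  have hstep1 : ∫ ω, (T' ω - T'' ω) ∂P ≤ ∫ ω, Set.indicator Bᶜ T ω ∂P := by
    refine integral_mono_ae (hT'.sub hT'') (hT.indicator hB.compl) ?_
    filter_upwards [h2, h3] with ω h2ω h3ω
    by_cases hω : ω ∈ B
    · simp only [Set.indicator_of_notMem (by simpa using hω : ω ∉ Bᶜ)]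
      linarith [h3ω hω]
    · simpa [Set.indicator_of_mem (by simpa using hω : ω ∈ Bᶜ)] using h2ω
  rw [integral_indicator hB.compl] at hstep1
  -- Step 2: ∫_{Bᶜ} T = ∫ T - ∫_B T
  have hsplit : ∫ ω in B, T ω ∂P + ∫ ω in Bᶜ, T ω ∂P = ∫ ω, T ω ∂P :=
    integral_add_compl hB hT
  -- Step 3: lower bound on ∫_B T
  have hmono : ∫ ω in B \ A', T ω ∂P ≤ ∫ ω in B, T ω ∂P := by
    refine setIntegral_mono_set hT.integrableOn (ae_restrict_of_ae h1) ?_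
    exact HasSubset.Subset.eventuallyLE Set.diff_subset
  have hconst : (1 - ε) * c * (P (B \ A')).toReal ≤ ∫ ω in B \ A', T ω ∂P := by
    refine setIntegral_ge_of_const_le_real (hB.diff hA'meas) (measure_ne_top P _)
      (fun x hx => ?_) hT.integrableOn
    have hxA : x ∉ A := fun h => hx.2 (hAA' h)
    exact le_of_not_gt hxA
  -- Step 4: measure bound
  have hmeas : 1 / 4 - ε ≤ (P (B \ A')).toReal := by
    have hsub : P B ≤ P (B \ A') + P A' := by
      refine le_trans (measure_mono ?_) (measure_union_le _ _)
      intro x hx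
      by_cases h : x ∈ A'
      · exact Or.inr h
      · exact Or.inl ⟨hx, h⟩
    have := ENNReal.toReal_mono (by
      exact ENNReal.add_ne_top.mpr ⟨measure_ne_top P _, measure_ne_top P _⟩) hsub
    rw [ENNReal.toReal_add (measure_ne_top P _) (measure_ne_top P _)] at this
    linarith
  -- Combine
  have hr : (P (B \ A')).toReal ≤ 1 := by
    simpa using ENNReal.toReal_mono (measure_ne_top P Set.univ) (measure_mono (Set.subset_univ (B \ A')))
  set r := (P (B \ A')).toReal with hrdef
  have key : ∫ ω, (T' ω - T'' ω) ∂P ≤ (1 + ε) * c - (1 - ε) * c * r := by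
    have : ∫ ω in Bᶜ, T ω ∂P = ∫ ω, T ω ∂P - ∫ ω in B, T ω ∂P := by linarith
    calc ∫ ω, (T' ω - T'' ω) ∂P ≤ ∫ ω in Bᶜ, T ω ∂P := hstep1
      _ = ∫ ω, T ω ∂P - ∫ ω in B, T ω ∂P := this
      _ ≤ (1 + ε) * c - (1 - ε) * c * r := by
          have := le_trans hconst hmono
          linarith
  have hfin : (1 + ε) * c - (1 - ε) * c * r < (1 - ε) * c := by
    nlinarith [mul_nonneg (sub_nonneg.mpr hr) hc.le]
  linarith
end
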